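/- Let R_1 ≤ R_2 ≤ ··· ≤ R_n be nonempty subsets of a finite poset P (with respect to the order ≤ on subsets). Then |R_1| + |R_2| + ··· + |R_n| = |R_1 ∪ R_2 ∪ ··· ∪ R_n| + Σ_{i=1}^{n−1} |R_i ∩ R_{i+1}|. -/

import Mathlib

/-!
Common infrastructure: abstract simplicial complexes, geometric realization,
homotopy equivalence, reduced simplicial cohomology, squarefree monomial ideals
(encoded as upward closed families of finite sets), Koszul-complex multigraded
Betti numbers, and letterplace ideals of posets.
-/

noncomputable section

open Finset

attribute [local instance] Classical.propDecidable

universe u v w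

/-- An abstract simplicial complex on the vertex type `V`: a collection of
finite subsets of `V` (the faces) closed under taking subsets. -/
structure SComplex (V : Type u) where
  faces : Set (Finset V)
  down_closed : ∀ {F G : Finset V}, F ∈ faces → G ⊆ F → G ∈ faces

namespace SComplex

/-- The geometric realization of a simplicial complex: the subspace of `V → ℝ`
consisting of the convex weight functions supported on a face. -/
def realization {V : Type u} [Fintype V] (X : SComplex V) : Set (V → ℝ) :=
  {f | (∀ v, 0 ≤ f v) ∧ (∑ v, f v) = 1 ∧ ∃ F ∈ X.faces, ∀ v, f v ≠ 0 → v ∈ F}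

/-- Two simplicial complexes are homotopy equivalent if their geometric
realizations are homotopy equivalent topological spaces. -/
def HEquiv {V : Type u} {W : Type v} [Fintype V] [Fintype W]
    (X : SComplex V) (Y : SComplex W) : Prop :=
  Nonempty (ContinuousMap.HomotopyEquiv X.realization Y.realization)

/-- Isomorphism ("equality up to relabeling of vertices") of simplicial
complexes: an order isomorphism between the face posets. -/
def IsIsomorphic {V : Type u} {W : Type v} (X : SComplex V) (Y : SComplex W) : Prop :=
  Nonempty ({F : Finset V // F ∈ X.faces} ≃o {G : Finset W // G ∈ Y.faces})

/-- The induced subcomplex on a subset `S` of the vertex set. -/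
def restrict {V : Type u} (X : SComplex V) (S : Set V) : SComplex V where
  faces := {F | F ∈ X.faces ∧ ∀ v ∈ F, v ∈ S}
  down_closed := by
    intro F G hF hGF
    exact ⟨X.down_closed hF.1 hGF, fun v hv => hF.2 v (hGF hv)⟩

/-- The join of two simplicial complexes (on the disjoint union of the two
vertex types). -/
def join {V : Type u} {W : Type v} (X : SComplex V) (Y : SComplex W) :
    SComplex (V ⊕ W) where
  faces := {F | F.preimage Sum.inl Sum.inl_injective.injOn ∈ X.faces ∧
                F.preimage Sum.inr Sum.inr_injective.injOn ∈ Y.faces}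
  down_closed := by
    intro F G hF hGF
    constructor
    · exact X.down_closed hF.1 fun x hx => by
        simp only [Finset.mem_preimage] at hx ⊢
        exact hGF hx
    · exact Y.down_closed hF.2 fun x hx => by
        simp only [Finset.mem_preimage] at hx ⊢
        exact hGF hx

/-- The join of a finite family of simplicial complexes on pairwise disjoint
vertex types. -/
def bigJoin {ι : Type u} {V : ι → Type v} (X : ∀ i, SComplex (V i)) :
    SComplex (Σ i, V i) where
  faces := {F | ∀ i, F.preimage (Sigma.mk i) sigma_mk_injective.injOn ∈ (X i).faces}
  down_closed := by
    intro F G hF hGF i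
    exact (X i).down_closed (hF i) fun x hx => by
      simp only [Finset.mem_preimage] at hx ⊢
      exact hGF hx

/-- The simplicial complex consisting of two disjoint points. -/
def twoPoint : SComplex Bool where
  faces := {F | F.card ≤ 1}
  down_closed := by
    intro F G hF hGF
    exact le_trans (Finset.card_le_card hGF) hF

/-- The suspension of a simplicial complex: its join with two points. -/
def suspension {V : Type u} (X : SComplex V) : SComplex (V ⊕ Bool) :=
  join X twoPoint

/-- Vertex type of the `m`-fold iterated suspension. -/
def SuspType (V : Type u) : ℕ → Type u
  | 0 => V
  | m + 1 => SuspType V m ⊕ Bool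

/-- The `m`-fold iterated suspension of a simplicial complex. -/
def iterSusp {V : Type u} (X : SComplex V) : (m : ℕ) → SComplex (SuspType V m)
  | 0 => X
  | m + 1 => suspension (iterSusp X m)

end SComplex

/-- Position of `x` with respect to a finite set: the number of elements of `F`
preceding `x` in a fixed well-ordering of the vertex type.  Used for the signs
in (co)chain complexes. -/
def vpos {V : Type u} (F : Finset V) (x : V) : ℕ :=
  (F.filter fun w => WellOrderingRel w x).card

namespace SComplex

variable (k : Type w) [Field k]

/-- The faces of dimension `i` (i.e. of cardinality `i + 1`), `i ∈ ℤ`. -/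
abbrev Face {V : Type u} (X : SComplex V) (i : ℤ) : Type u :=
  {F : Finset V // F ∈ X.faces ∧ (F.card : ℤ) = i + 1}

/-- Reduced simplicial `i`-cochains of `X` with coefficients in `k`
(the empty face in dimension `-1` is included). -/
abbrev cochain {V : Type u} (X : SComplex V) (i : ℤ) : Type (max u w) :=
  Face X i → k

/-- Evaluation of a cochain on an arbitrary finite set (zero if the set is not
a face of the appropriate dimension). -/
def evalC {V : Type u} {X : SComplex V} {i : ℤ} (f : cochain k X i) (F : Finset V) : k :=
  if h : F ∈ X.faces ∧ (F.card : ℤ) = i + 1 then f ⟨F, h⟩ else 0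

theorem evalC_add {V : Type u} {X : SComplex V} {i : ℤ} (f g : cochain k X i)
    (F : Finset V) : evalC k (f + g) F = evalC k f F + evalC k g F := by
  unfold evalC
  split_ifs <;> simp

theorem evalC_smul {V : Type u} {X : SComplex V} {i : ℤ} (s : k) (f : cochain k X i)
    (F : Finset V) : evalC k (s • f) F = s * evalC k f F := by
  unfold evalC
  split_ifs <;> simp

/-- The simplicial coboundary map on reduced cochains. -/
def coboundary {V : Type u} (X : SComplex V) (i : ℤ) :
    cochain k X i →ₗ[k] cochain k X (i + 1) where
  toFun f F := ∑ v ∈ F.1, ((-1 : k) ^ vpos F.1 v) * evalC k f (F.1.erase v)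
  map_add' f g := by
    funext F
    show (∑ v ∈ F.1, ((-1 : k) ^ vpos F.1 v) * evalC k (f + g) (F.1.erase v))
      = (∑ v ∈ F.1, ((-1 : k) ^ vpos F.1 v) * evalC k f (F.1.erase v))
      + (∑ v ∈ F.1, ((-1 : k) ^ vpos F.1 v) * evalC k g (F.1.erase v))
    rw [← Finset.sum_add_distrib]
    exact Finset.sum_congr rfl fun v _ => by rw [evalC_add, mul_add]
  map_smul' s f := by
    funext F
    show (∑ v ∈ F.1, ((-1 : k) ^ vpos F.1 v) * evalC k (s • f) (F.1.erase v))
      = s * ∑ v ∈ F.1, ((-1 : k) ^ vpos F.1 v) * evalC k f (F.1.erase v)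
    rw [Finset.mul_sum]
    exact Finset.sum_congr rfl fun v _ => by rw [evalC_smul]; ring

/-- The dimension of the `i`-th reduced simplicial cohomology of `X` with
coefficients in the field `k` (computed as `dim ker d^i - dim im d^(i-1)`). -/
def redCohomDim {V : Type u} (X : SComplex V) (i : ℤ) : ℕ :=
  Module.finrank k (LinearMap.ker (coboundary k X i)) -
    Module.finrank k (LinearMap.range (coboundary k X (i - 1)))

/-- The generating series `t·H̃(X,t) = ∑_{i ≥ -1} t^{i+1} dim_k H̃^i(X;k)`,
an element of `ℕ⟦t⟧`. -/
def hSeries {V : Type u} (X : SComplex V) : PowerSeries ℕ :=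
  PowerSeries.mk fun m => redCohomDim k X ((m : ℤ) - 1)

end SComplex

/-- A squarefree monomial ideal on the set of variables `W`, encoded by the
upward closed family of the supports of the squarefree monomials belonging
to it. -/
structure SqfIdeal (W : Type u) where
  carrier : Set (Finset W)
  up_closed : ∀ {S T : Finset W}, S ∈ carrier → S ⊆ T → T ∈ carrier

namespace SqfIdeal

/-- The basis of the degree-`R` strand of the Koszul complex `K(x;I)` in
homological degree `i`. -/
abbrev KBasis {W : Type u} (I : SqfIdeal W) (R : Finset W) (i : ℤ) : Type u :=
  {S : Finset W // S ⊆ R ∧ (S.card : ℤ) = i ∧ R \ S ∈ I.carrier}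

/-- The degree-`R` strand of the Koszul complex of `I`, in homological
degree `i`, with coefficients in `k`. -/
abbrev kchain (k : Type w) [Field k] {W : Type u} (I : SqfIdeal W) (R : Finset W)
    (i : ℤ) : Type (max u w) :=
  KBasis I R i → k

variable (k : Type w) [Field k]

/-- Evaluation of a Koszul chain on an arbitrary finite set. -/
def evalK {W : Type u} {I : SqfIdeal W} {R : Finset W} {i : ℤ}
    (f : kchain k I R i) (S : Finset W) : k :=
  if h : S ⊆ R ∧ (S.card : ℤ) = i ∧ R \ S ∈ I.carrier then f ⟨S, h⟩ else 0

theorem evalK_add {W : Type u} {I : SqfIdeal W} {R : Finset W} {i : ℤ}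
    (f g : kchain k I R i) (S : Finset W) :
    evalK k (f + g) S = evalK k f S + evalK k g S := by
  unfold evalK
  split_ifs <;> simp

theorem evalK_smul {W : Type u} {I : SqfIdeal W} {R : Finset W} {i : ℤ}
    (s : k) (f : kchain k I R i) (S : Finset W) :
    evalK k (s • f) S = s * evalK k f S := by
  unfold evalK
  split_ifs <;> simp

/-- The Koszul differential on the degree-`R` strand (as a map of the dual
function spaces). -/
def koszulD {W : Type u} (I : SqfIdeal W) (R : Finset W) (i : ℤ) :
    kchain k I R i →ₗ[k] kchain k I R (i - 1) where
  toFun f S := ∑ v ∈ R \ S.1, ((-1 : k) ^ vpos S.1 v) * evalK k f (insert v S.1)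
  map_add' f g := by
    funext S
    show (∑ v ∈ R \ S.1, ((-1 : k) ^ vpos S.1 v) * evalK k (f + g) (insert v S.1))
      = (∑ v ∈ R \ S.1, ((-1 : k) ^ vpos S.1 v) * evalK k f (insert v S.1))
      + (∑ v ∈ R \ S.1, ((-1 : k) ^ vpos S.1 v) * evalK k g (insert v S.1))
    rw [← Finset.sum_add_distrib]
    exact Finset.sum_congr rfl fun v _ => by rw [evalK_add, mul_add]
  map_smul' s f := by
    funext S
    show (∑ v ∈ R \ S.1, ((-1 : k) ^ vpos S.1 v) * evalK k (s • f) (insert v S.1))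
      = s * ∑ v ∈ R \ S.1, ((-1 : k) ^ vpos S.1 v) * evalK k f (insert v S.1)
    rw [Finset.mul_sum]
    exact Finset.sum_congr rfl fun v _ => by rw [evalK_smul]; ring

end SqfIdeal

/-- The multigraded Betti number `β_{i,R}(I) = dim_k Tor_i(I,k)_R` of a
squarefree monomial ideal in the squarefree multidegree `R`, computed as the
dimension of the `i`-th homology of the degree-`R` strand of the Koszul
complex. -/
def multiBetti (k : Type w) [Field k] {W : Type u} (I : SqfIdeal W) (i : ℤ)
    (R : Finset W) : ℕ :=
  Module.finrank k (LinearMap.ker (SqfIdeal.koszulD k I R i)) -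
    Module.finrank k (LinearMap.range (SqfIdeal.koszulD k I R (i + 1)))

/-- The graded Betti number `β_{i,j}(I) = dim_k Tor_i(I,k)_j` of a squarefree
monomial ideal: the sum of the multigraded Betti numbers over the (squarefree)
multidegrees of cardinality `j`. -/
def gradedBetti (k : Type w) [Field k] {W : Type u} [Fintype W] (I : SqfIdeal W)
    (i : ℤ) (j : ℤ) : ℕ :=
  if 0 ≤ j then
    ∑ R ∈ Finset.powersetCard j.toNat (Finset.univ : Finset W), multiBetti k I i R
  else 0

/-- The `n`-th letterplace ideal `L(n,P)` of a poset `P`: the squarefree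
monomial ideal on the variables `x_{(i,p)}`, `(i,p) ∈ [n] × P`, generated by
the monomials `x_{(1,p₁)} ⋯ x_{(n,pₙ)}` with `p₁ ≤ p₂ ≤ ⋯ ≤ pₙ` in `P`. -/
def letterplace (n : ℕ) (P : Type u) [PartialOrder P] : SqfIdeal (Fin n × P) where
  carrier := {T | ∃ c : Fin n → P, Monotone c ∧ ∀ i, (i, c i) ∈ T}
  up_closed := by
    rintro S T ⟨c, hc, hm⟩ hST
    exact ⟨c, hc, fun i => hST (hm i)⟩

/-- The `i`-th part `R_i ⊆ P` of a multidegree `R ⊆ [n] × P`. -/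
def part {n : ℕ} {P : Type u} (R : Finset (Fin n × P)) (i : Fin n) : Finset P :=
  (R.filter fun q => q.1 = i).image Prod.snd

/-- The set of maximal elements of the induced subposet on `A`. -/
def maxSet {P : Type u} [PartialOrder P] (A : Finset P) : Finset P :=
  A.filter fun a => ∀ b ∈ A, a ≤ b → a = b

/-- The set of minimal elements of the induced subposet on `A`. -/
def minSet {P : Type u} [PartialOrder P] (A : Finset P) : Finset P :=
  A.filter fun a => ∀ b ∈ A, b ≤ a → a = b

/-- The transitive order `A ≤ B` on subsets of a poset: every maximal element
of `A` is below some minimal element of `B`, and every minimal element of `B`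
is above some maximal element of `A`. -/
def subsetLE {P : Type u} [PartialOrder P] (A B : Finset P) : Prop :=
  (∀ a ∈ maxSet A, ∃ b ∈ minSet B, a ≤ b) ∧
  (∀ b ∈ minSet B, ∃ a ∈ maxSet A, a ≤ b)

/-- The independence complex of the bipartite graph on two disjoint copies of
`P`, with left vertex set `A`, right vertex set `B`, and edges the pairs
`(p, q) ∈ A × B` with `p ≤ q` in `P`. -/
def XComplex {P : Type u} [PartialOrder P] (A B : Finset P) : SComplex (P ⊕ P) where
  faces := {F | (∀ x ∈ F, Sum.elim (· ∈ A) (· ∈ B) x) ∧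
                ∀ p q : P, Sum.inl p ∈ F → Sum.inr q ∈ F → ¬ p ≤ q}
  down_closed := by
    intro F G hF hGF
    exact ⟨fun x hx => hF.1 x (hGF hx), fun p q hp hq => hF.2 p q (hGF hp) (hGF hq)⟩

/-- `Y₁`: the simplicial complex on `A` whose faces are the subsets `F ⊆ A`
such that some `b ∈ B` dominates no element of `F`. -/
def Y1Complex {P : Type u} [PartialOrder P] (A B : Finset P) : SComplex P where
  faces := {F | (∀ x ∈ F, x ∈ A) ∧ ∃ b ∈ B, ∀ a ∈ F, ¬ a ≤ b}
  down_closed := by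
    rintro F G ⟨hFA, b, hb, hFb⟩ hGF
    exact ⟨fun x hx => hFA x (hGF hx), b, hb, fun a ha => hFb a (hGF ha)⟩

/-- `Y₂`: the simplicial complex on `B` whose faces are the subsets `F ⊆ B`
such that some `a ∈ A` is dominated by no element of `F`. -/
def Y2Complex {P : Type u} [PartialOrder P] (A B : Finset P) : SComplex P where
  faces := {F | (∀ x ∈ F, x ∈ B) ∧ ∃ a ∈ A, ∀ b ∈ F, ¬ a ≤ b}
  down_closed := by
    rintro F G ⟨hFB, a, ha, hFa⟩ hGF
    exact ⟨fun x hx => hFB x (hGF hx), a, ha, fun b hb => hFa b (hGF hb)⟩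

/-- The restriction `Δ(n,P)|_R` of the Stanley–Reisner complex of the
letterplace ideal `L(n,P)` to the vertex set `R`. -/
def deltaRes (n : ℕ) (P : Type u) [PartialOrder P] (R : Finset (Fin n × P)) :
    SComplex (Fin n × P) where
  faces := {F | F ⊆ R ∧ ¬ ∃ c : Fin n → P, Monotone c ∧ ∀ i, (i, c i) ∈ F}
  down_closed := by
    rintro F G ⟨hFR, hF⟩ hGF
    exact ⟨hGF.trans hFR, fun ⟨c, hc, hm⟩ => hF ⟨c, hc, fun i => hGF (hm i)⟩⟩

/-- `A` is a maximal antichain of the poset `P`. -/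
def IsMaxAntichain' {P : Type u} [PartialOrder P] (A : Finset P) : Prop :=
  IsAntichain (· ≤ ·) (A : Set P) ∧
    ∀ B : Finset P, IsAntichain (· ≤ ·) (B : Set P) → A ⊆ B → A = B

/-- The maximal cardinality of an antichain in the finite poset `P`. -/
def maxAntichainCard (P : Type u) [PartialOrder P] [Fintype P] : ℕ :=
  Finset.sup (Finset.univ.filter fun A : Finset P => IsAntichain (· ≤ ·) (A : Set P))
    Finset.card

/-- The independence complex of a bipartite graph, with parts `A` and `B` and
edge relation `E`. -/
def bipIndep {A : Type u} {B : Type v} (E : A → B → Prop) : SComplex (A ⊕ B) where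
  faces := {F | ∀ a b, Sum.inl a ∈ F → Sum.inr b ∈ F → ¬ E a b}
  down_closed := by
    intro F G hF hGF a b ha hb
    exact hF a b (hGF ha) (hGF hb)

/-!
If `R₁ ≤ R₂ ≤ ⋯ ≤ Rₙ`, the lower closures of the `Rᵢ` grow and their upper closures shrink,
while an element lying below `Rⱼ` and above `Rⱼ₊₁` must belong to `Rⱼ`. Hence each element of
`P` lies in the `Rᵢ` for an interval of indices `i`, and for such families inclusion–exclusion
telescopes: `Rₙ₊₁` meets `R₁ ∪ ⋯ ∪ Rₙ` only inside `Rₙ`.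
-/

theorem Finset.sum_card_eq_card_biUnion_add_sum_card_inter_succ {α : Type*} [DecidableEq α]
    {n : ℕ} (R : Fin (n + 1) → Finset α)
    (hR : ∀ i j k, i ≤ j → j ≤ k → R i ∩ R k ⊆ R j) :
    ∑ i, #(R i) = #(univ.biUnion R) + ∑ i : Fin n, #(R i.castSucc ∩ R i.succ) := by
  induction n with
  | zero => simp
  | succ n ih =>
    have hR' : ∀ i j k : Fin (n + 1), i ≤ j → j ≤ k →
        R i.castSucc ∩ R k.castSucc ⊆ R j.castSucc := fun i j k hij hjk =>
      hR _ _ _ (Fin.castSucc_le_castSucc_iff.2 hij) (Fin.castSucc_le_castSucc_iff.2 hjk)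
    have hunion :
        univ.biUnion R = univ.biUnion (fun i : Fin (n + 1) => R i.castSucc) ∪ R (Fin.last _) := by
      ext x
      simp only [mem_biUnion, mem_univ, true_and, mem_union, Fin.exists_fin_succ']
    have hinter : univ.biUnion (fun i : Fin (n + 1) => R i.castSucc) ∩ R (Fin.last _) =
        R (Fin.last n).castSucc ∩ R (Fin.last _) := by
      refine Subset.antisymm (fun x hx => ?_) (inter_subset_inter_right
        (subset_biUnion_of_mem (fun i : Fin (n + 1) => R i.castSucc) (mem_univ _)))
      obtain ⟨hx, hlast⟩ := mem_inter.1 hx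
      obtain ⟨i, -, hi⟩ := mem_biUnion.1 hx
      exact mem_inter.2 ⟨hR _ _ _ (Fin.castSucc_le_castSucc_iff.2 (Fin.le_last i))
        (Fin.le_last _) (mem_inter.2 ⟨hi, hlast⟩), hlast⟩
    have hcard :=
      card_union_add_card_inter (univ.biUnion fun i : Fin (n + 1) => R i.castSucc) (R (Fin.last _))
    rw [hinter] at hcard
    rw [Fin.sum_univ_castSucc, ih _ hR', Fin.sum_univ_castSucc, hunion]
    simp only [Fin.succ_castSucc, Fin.succ_last, Nat.succ_eq_add_one]
    omega

section subsetLE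

variable {P : Type*} [PartialOrder P] {A B : Finset P}

theorem exists_le_mem_maxSet {a : P} (ha : a ∈ A) : ∃ m ∈ maxSet A, a ≤ m := by
  obtain ⟨m, ham, hm⟩ := A.exists_le_maximal ha
  exact ⟨m, mem_filter.2 ⟨hm.1, fun b hb hmb => le_antisymm hmb (hm.2 hb hmb)⟩, ham⟩

theorem exists_mem_minSet_le {b : P} (hb : b ∈ B) : ∃ m ∈ minSet B, m ≤ b := by
  obtain ⟨m, hmb, hm⟩ := B.exists_le_minimal hb
  exact ⟨m, mem_filter.2 ⟨hm.1, fun a ha ham => le_antisymm (hm.2 ha ham) ham⟩, hmb⟩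

theorem subsetLE.lowerClosure_le (h : subsetLE A B) :
    lowerClosure (A : Set P) ≤ lowerClosure (B : Set P) := by
  refine _root_.lowerClosure_le.2 fun a ha => ?_
  obtain ⟨m, hm, ham⟩ := exists_le_mem_maxSet ha
  obtain ⟨b, hb, hmb⟩ := h.1 m hm
  exact ⟨b, (mem_filter.1 hb).1, ham.trans hmb⟩

theorem subsetLE.upperClosure_le (h : subsetLE A B) :
    upperClosure (A : Set P) ≤ upperClosure (B : Set P) := by
  refine le_upperClosure.2 fun b hb => ?_
  obtain ⟨m, hm, hmb⟩ := exists_mem_minSet_le hb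
  obtain ⟨a, ha, ham⟩ := h.2 m hm
  exact ⟨a, (mem_filter.1 ha).1, ham.trans hmb⟩

/-- An element below `A` and above `B` is forced to be a maximal element of `A` which is also a
minimal element of `B`. -/
theorem subsetLE.lowerClosure_inter_upperClosure_subset (h : subsetLE A B) :
    (lowerClosure (A : Set P) : Set P) ∩ upperClosure (B : Set P) ⊆ A := by
  rintro x ⟨⟨a, ha, hxa⟩, ⟨b, hb, hbx⟩⟩
  obtain ⟨m, hm, ham⟩ := exists_le_mem_maxSet ha
  obtain ⟨c, hc, hmc⟩ := h.1 m hm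
  have hbc : c = b := (mem_filter.1 hc).2 b hb (hbx.trans (hxa.trans (ham.trans hmc)))
  have hax : a ≤ x := ham.trans (hmc.trans (hbc ▸ hbx))
  exact le_antisymm hxa hax ▸ ha

theorem mem_of_subsetLE_chain {n : ℕ} {R : Fin (n + 1) → Finset P}
    (hR : ∀ i : Fin n, subsetLE (R i.castSucc) (R i.succ)) {i j k : Fin (n + 1)}
    (hij : i ≤ j) (hjk : j ≤ k) {x : P} (hi : x ∈ R i) (hk : x ∈ R k) : x ∈ R j := by
  obtain rfl | hjk := hjk.eq_or_lt
  · exact hk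
  obtain ⟨j, rfl⟩ := Fin.exists_castSucc_eq.2 (Fin.ne_last_of_lt hjk)
  have hlower : Monotone fun i => lowerClosure (R i : Set P) :=
    Fin.monotone_iff_le_succ.2 fun i => (hR i).lowerClosure_le
  have hupper : Monotone fun i => upperClosure (R i : Set P) :=
    Fin.monotone_iff_le_succ.2 fun i => (hR i).upperClosure_le
  exact (hR j).lowerClosure_inter_upperClosure_subset
    ⟨hlower hij (subset_lowerClosure hi),
      hupper (Fin.castSucc_lt_iff_succ_le.1 hjk) (subset_upperClosure hk)⟩

end subsetLE

theorem statement_15_general {P : Type u} [PartialOrder P] (n : ℕ)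
    (Rf : Fin (n + 1) → Finset P)
    (hle : ∀ i : Fin n, subsetLE (Rf i.castSucc) (Rf i.succ)) :
    ∑ i, (Rf i).card =
      (Finset.univ.biUnion Rf).card +
        ∑ i : Fin n, (Rf i.castSucc ∩ Rf i.succ).card :=
  sum_card_eq_card_biUnion_add_sum_card_inter_succ Rf fun _ _ _ hij hjk _ hx =>
    mem_of_subsetLE_chain hle hij hjk (mem_inter.1 hx).1 (mem_inter.1 hx).2

/-- Let `R₁ ≤ R₂ ≤ ⋯ ≤ Rₙ` be nonempty subsets of a finite
poset `P` (for the order `≤` on subsets; here `n` is rendered as `n + 1`).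
Then `|R₁| + ⋯ + |Rₙ| = |R₁ ∪ ⋯ ∪ Rₙ| + ∑_{i=1}^{n-1} |Rᵢ ∩ R_{i+1}|`. -/
theorem statement_15 {P : Type u} [PartialOrder P] [Fintype P] (n : ℕ)
    (Rf : Fin (n + 1) → Finset P) (hne : ∀ i, (Rf i).Nonempty)
    (hle : ∀ i : Fin n, subsetLE (Rf i.castSucc) (Rf i.succ)) :
    ∑ i, (Rf i).card =
      (Finset.univ.biUnion Rf).card +
        ∑ i : Fin n, (Rf i.castSucc ∩ Rf i.succ).card :=
  statement_15_general n Rf hle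

end
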